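/- arXiv:2310.18593 — 3 statements merged into one kernel-verified Lean document; each statement's English description precedes it below -/
import Mathlib

section
/- Let A = [A₁ | A₂] and B = [B₁ | B₂] be d×d orthogonal matrices with A₁ ∈ ℝ^{d×k}, B₁ ∈ ℝ^{d×ℓ}. Then ‖A₁A₁ᵀ − B₁B₁ᵀ‖₂ = max{‖B₂ᵀA₁‖₂, ‖A₂ᵀB₁‖₂}. -/
open Matrix

noncomputable def specNorm {m n : ℕ} (A : Matrix (Fin m) (Fin n) ℝ) : ℝ :=
  ‖LinearMap.toContinuousLinearMap (Matrix.toEuclideanLin A)‖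

noncomputable def sigmaMin {m n : ℕ} (A : Matrix (Fin m) (Fin n) ℝ) : ℝ :=
  sInf {r : ℝ | ∃ x : EuclideanSpace ℝ (Fin n), ‖x‖ = 1 ∧ r = ‖Matrix.toEuclideanLin A x‖}

noncomputable def vnorm {d : ℕ} (v : Fin d → ℝ) : ℝ := Real.sqrt (∑ i, v i ^ 2)

noncomputable abbrev Lm {m n : ℕ} (A : Matrix (Fin m) (Fin n) ℝ) :
    EuclideanSpace ℝ (Fin n) →L[ℝ] EuclideanSpace ℝ (Fin m) :=
  LinearMap.toContinuousLinearMap (Matrix.toEuclideanLin A)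

lemma specNorm_def {m n : ℕ} (A : Matrix (Fin m) (Fin n) ℝ) : specNorm A = ‖Lm A‖ := rfl

lemma Lm_mul_apply {m n p : ℕ} (A : Matrix (Fin m) (Fin n) ℝ) (B : Matrix (Fin n) (Fin p) ℝ)
    (x : EuclideanSpace ℝ (Fin p)) : Lm (A * B) x = Lm A (Lm B x) := by
  simp [Lm, Matrix.toEuclideanLin_apply, Matrix.mulVec_mulVec]

lemma Lm_one_apply {n : ℕ} (x : EuclideanSpace ℝ (Fin n)) :
    Lm (1 : Matrix (Fin n) (Fin n) ℝ) x = x := by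
  simp [Lm, Matrix.toEuclideanLin_apply]

lemma Lm_zero_apply {m n : ℕ} (x : EuclideanSpace ℝ (Fin n)) :
    Lm (0 : Matrix (Fin m) (Fin n) ℝ) x = 0 := by
  simp [Lm]

lemma Lm_sub_apply {m n : ℕ} (A B : Matrix (Fin m) (Fin n) ℝ) (x : EuclideanSpace ℝ (Fin n)) :
    Lm (A - B) x = Lm A x - Lm B x := by
  simp [Lm]

lemma conjT_eq_T {m n : ℕ} (A : Matrix (Fin m) (Fin n) ℝ) : Aᴴ = Aᵀ := by
  ext i j; simp [Matrix.conjTranspose_apply]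

lemma inner_Lm_transpose {m n : ℕ} (A : Matrix (Fin m) (Fin n) ℝ) (x : EuclideanSpace ℝ (Fin m))
    (y : EuclideanSpace ℝ (Fin n)) :
    inner ℝ (Lm Aᵀ x) y = (inner ℝ x (Lm A y) : ℝ) := by
  have h := Matrix.toEuclideanLin_conjTranspose_eq_adjoint A
  rw [conjT_eq_T] at h
  simp only [Lm, LinearMap.coe_toContinuousLinearMap', h]
  exact LinearMap.adjoint_inner_left _ _ _

lemma inner_Lm_Lm {m n p : ℕ} (M : Matrix (Fin m) (Fin n) ℝ) (N : Matrix (Fin m) (Fin p) ℝ)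
    (x : EuclideanSpace ℝ (Fin n)) (y : EuclideanSpace ℝ (Fin p)) :
    inner ℝ (Lm M x) (Lm N y) = (inner ℝ x (Lm (Mᵀ * N) y) : ℝ) := by
  rw [Lm_mul_apply]
  conv_lhs => rw [← Matrix.transpose_transpose M]
  exact inner_Lm_transpose Mᵀ x (Lm N y)

lemma specNorm_nonneg {m n : ℕ} (A : Matrix (Fin m) (Fin n) ℝ) : 0 ≤ specNorm A :=
  norm_nonneg _

lemma Lm_apply_le {m n : ℕ} (A : Matrix (Fin m) (Fin n) ℝ) (x : EuclideanSpace ℝ (Fin n)) :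
    ‖Lm A x‖ ≤ specNorm A * ‖x‖ := (Lm A).le_opNorm x

lemma specNorm_transpose {m n : ℕ} (A : Matrix (Fin m) (Fin n) ℝ) :
    specNorm Aᵀ = specNorm A := by
  have h := Matrix.toEuclideanLin_conjTranspose_eq_adjoint A
  rw [conjT_eq_T] at h
  rw [specNorm_def, specNorm_def, Lm, h, LinearMap.adjoint_toContinuousLinearMap]
  exact (ContinuousLinearMap.adjoint).norm_map _

lemma norm_Lm_iso {m n : ℕ} {C : Matrix (Fin m) (Fin n) ℝ} (h : Cᵀ * C = 1)
    (x : EuclideanSpace ℝ (Fin n)) : ‖Lm C x‖ = ‖x‖ := by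
  have h1 : (inner ℝ (Lm C x) (Lm C x) : ℝ) = inner ℝ x x := by
    rw [inner_Lm_Lm, h, Lm_one_apply]
  rw [real_inner_self_eq_norm_sq, real_inner_self_eq_norm_sq] at h1
  have := congrArg Real.sqrt h1
  rwa [Real.sqrt_sq (norm_nonneg _), Real.sqrt_sq (norm_nonneg _)] at this

lemma specNorm_iso_le_one {m n : ℕ} {C : Matrix (Fin m) (Fin n) ℝ} (h : Cᵀ * C = 1) :
    specNorm C ≤ 1 := by
  refine ContinuousLinearMap.opNorm_le_bound _ zero_le_one fun x => ?_
  rw [show (LinearMap.toContinuousLinearMap (Matrix.toEuclideanLin C)) x = Lm C x from rfl,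
    norm_Lm_iso h, one_mul]

lemma specNorm_mul_le {m n p : ℕ} (A : Matrix (Fin m) (Fin n) ℝ) (B : Matrix (Fin n) (Fin p) ℝ) :
    specNorm (A * B) ≤ specNorm A * specNorm B := by
  have : Lm (A * B) = (Lm A).comp (Lm B) := ContinuousLinearMap.ext (Lm_mul_apply A B)
  rw [specNorm_def, this]
  exact ContinuousLinearMap.opNorm_comp_le _ _

lemma specNorm_iso_mul {m n p : ℕ} {C : Matrix (Fin m) (Fin n) ℝ} (h : Cᵀ * C = 1)
    (X : Matrix (Fin n) (Fin p) ℝ) : specNorm (C * X) = specNorm X := by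
  rw [specNorm_def]
  apply ContinuousLinearMap.opNorm_eq_of_bounds (norm_nonneg _)
  · intro x
    rw [show (LinearMap.toContinuousLinearMap (Matrix.toEuclideanLin (C * X))) x
        = Lm (C * X) x from rfl, Lm_mul_apply, norm_Lm_iso h]
    exact (Lm X).le_opNorm x
  · intro N hN hb
    refine ContinuousLinearMap.opNorm_le_bound _ hN fun x => ?_
    have := hb x
    rwa [show (LinearMap.toContinuousLinearMap (Matrix.toEuclideanLin (C * X))) x
        = Lm (C * X) x from rfl, Lm_mul_apply, norm_Lm_iso h] at this

lemma specNorm_mul_isoT {m n p : ℕ} {C : Matrix (Fin m) (Fin n) ℝ} (h : Cᵀ * C = 1)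
    (X : Matrix (Fin p) (Fin n) ℝ) : specNorm (X * Cᵀ) = specNorm X := by
  rw [← specNorm_transpose (X * Cᵀ), Matrix.transpose_mul, Matrix.transpose_transpose,
    specNorm_iso_mul h, specNorm_transpose]

lemma specNorm_neg {m n : ℕ} (A : Matrix (Fin m) (Fin n) ℝ) : specNorm (-A) = specNorm A := by
  rw [specNorm_def, specNorm_def]
  have : Lm (-A) = -(Lm A) := by
    refine ContinuousLinearMap.ext fun x => ?_
    simp [Lm]
  rw [this, norm_neg]

theorem stmt_7 {d k l : ℕ}
    (A₁ : Matrix (Fin d) (Fin k) ℝ) (A₂ : Matrix (Fin d) (Fin (d - k)) ℝ)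
    (B₁ : Matrix (Fin d) (Fin l) ℝ) (B₂ : Matrix (Fin d) (Fin (d - l)) ℝ)
    (hA₁ : A₁ᵀ * A₁ = 1) (hA₂ : A₂ᵀ * A₂ = 1) (hA₁₂ : A₁ᵀ * A₂ = 0)
    (hAcomplete : A₁ * A₁ᵀ + A₂ * A₂ᵀ = 1)
    (hB₁ : B₁ᵀ * B₁ = 1) (hB₂ : B₂ᵀ * B₂ = 1) (hB₁₂ : B₁ᵀ * B₂ = 0)
    (hBcomplete : B₁ * B₁ᵀ + B₂ * B₂ᵀ = 1) :
    specNorm (A₁ * A₁ᵀ - B₁ * B₁ᵀ) =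
      max (specNorm (B₂ᵀ * A₁)) (specNorm (A₂ᵀ * B₁)) := by
  set P : Matrix (Fin d) (Fin d) ℝ := A₁ * A₁ᵀ with hP
  set Q : Matrix (Fin d) (Fin d) ℝ := B₁ * B₁ᵀ with hQ
  have hPT : Pᵀ = P := by rw [hP, Matrix.transpose_mul, Matrix.transpose_transpose]
  have hQT : Qᵀ = Q := by rw [hQ, Matrix.transpose_mul, Matrix.transpose_transpose]
  have hPP : P * P = P := by
    rw [hP, Matrix.mul_assoc, ← Matrix.mul_assoc A₁ᵀ, hA₁, Matrix.one_mul]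
  have hQQ : Q * Q = Q := by
    rw [hQ, Matrix.mul_assoc, ← Matrix.mul_assoc B₁ᵀ, hB₁, Matrix.one_mul]
  have h1Q : (1 : Matrix (Fin d) (Fin d) ℝ) - Q = B₂ * B₂ᵀ := by
    rw [hQ, ← hBcomplete]; abel
  have h1P : (1 : Matrix (Fin d) (Fin d) ℝ) - P = A₂ * A₂ᵀ := by
    rw [hP, ← hAcomplete]; abel
  set a := specNorm (B₂ᵀ * A₁) with ha
  set b := specNorm (A₂ᵀ * B₁) with hb
  have key1 : specNorm ((1 - Q) * P) = a := by
    have e1 : (1 - Q) * P = B₂ * ((B₂ᵀ * A₁) * A₁ᵀ) := by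
      rw [h1Q, hP, Matrix.mul_assoc, ← Matrix.mul_assoc B₂ᵀ]
    rw [e1, specNorm_iso_mul hB₂, specNorm_mul_isoT hA₁]
  have key2 : specNorm (Q * (1 - P)) = b := by
    have e2 : Q * (1 - P) = B₁ * ((B₁ᵀ * A₂) * A₂ᵀ) := by
      rw [h1P, hQ, Matrix.mul_assoc, ← Matrix.mul_assoc B₁ᵀ]
    rw [e2, specNorm_iso_mul hB₁, specNorm_mul_isoT hA₂, ← specNorm_transpose (B₁ᵀ * A₂),
      Matrix.transpose_mul, Matrix.transpose_transpose]
  have hanneg : 0 ≤ a := specNorm_nonneg _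
  have hbnneg : 0 ≤ b := specNorm_nonneg _
  have low1 : a ≤ specNorm (P - Q) := by
    have hid : (1 - Q) * (P - Q) = (1 - Q) * P := by noncomm_ring [hQQ]
    calc a = specNorm ((1 - Q) * (P - Q)) := by rw [hid, key1]
    _ ≤ specNorm (1 - Q) * specNorm (P - Q) := specNorm_mul_le _ _
    _ ≤ 1 * specNorm (P - Q) := by
        apply mul_le_mul_of_nonneg_right _ (specNorm_nonneg _)
        rw [h1Q]
        calc specNorm (B₂ * B₂ᵀ) ≤ specNorm B₂ * specNorm B₂ᵀ := specNorm_mul_le _ _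
        _ ≤ 1 * 1 := by
            apply mul_le_mul (specNorm_iso_le_one hB₂) _ (specNorm_nonneg _) zero_le_one
            rw [specNorm_transpose]; exact specNorm_iso_le_one hB₂
        _ = 1 := one_mul 1
    _ = specNorm (P - Q) := one_mul _
  have low2 : b ≤ specNorm (P - Q) := by
    have hid : Q * (1 - P) = -((P - Q) * (1 - P)) := by noncomm_ring [hPP]
    calc b = specNorm (-((P - Q) * (1 - P))) := by rw [← hid, key2]
    _ = specNorm ((P - Q) * (1 - P)) := specNorm_neg _
    _ ≤ specNorm (P - Q) * specNorm (1 - P) := specNorm_mul_le _ _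
    _ ≤ specNorm (P - Q) * 1 := by
        apply mul_le_mul_of_nonneg_left _ (specNorm_nonneg _)
        rw [h1P]
        calc specNorm (A₂ * A₂ᵀ) ≤ specNorm A₂ * specNorm A₂ᵀ := specNorm_mul_le _ _
        _ ≤ 1 * 1 := by
            apply mul_le_mul (specNorm_iso_le_one hA₂) _ (specNorm_nonneg _) zero_le_one
            rw [specNorm_transpose]; exact specNorm_iso_le_one hA₂
        _ = 1 := one_mul 1
    _ = specNorm (P - Q) := mul_one _
  have up : specNorm (P - Q) ≤ max a b := by
    rw [specNorm_def]
    refine ContinuousLinearMap.opNorm_le_bound _ (le_max_of_le_left hanneg) fun x => ?_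
    rw [show (LinearMap.toContinuousLinearMap (Matrix.toEuclideanLin (P - Q))) x
        = Lm (P - Q) x from rfl]
    set u := Lm ((1 - Q) * P) x with hu
    set v := Lm (Q * (1 - P)) x with hv
    have hx : Lm (P - Q) x = u - v := by
      rw [hu, hv, ← Lm_sub_apply]
      congr 1
      noncomm_ring
    have horth : (inner ℝ u v : ℝ) = 0 := by
      rw [hu, hv, inner_Lm_Lm]
      have hz : ((1 - Q) * P)ᵀ * (Q * (1 - P)) = 0 := by
        rw [Matrix.transpose_mul, hPT, Matrix.transpose_sub, Matrix.transpose_one, hQT]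
        have h0 : (1 - Q) * Q = 0 := by noncomm_ring [hQQ]
        calc P * (1 - Q) * (Q * (1 - P)) = P * ((1 - Q) * Q) * (1 - P) := by noncomm_ring
        _ = 0 := by rw [h0]; noncomm_ring
      rw [hz, Lm_zero_apply, inner_zero_right]
    have hnormsq : ‖Lm (P - Q) x‖ ^ 2 = ‖u‖ ^ 2 + ‖v‖ ^ 2 := by
      rw [hx, norm_sub_sq_real, horth]; ring
    have hub : ‖u‖ ≤ a * ‖Lm P x‖ := by
      have : u = Lm ((1 - Q) * P) (Lm P x) := by
        rw [← Lm_mul_apply, show (1 - Q) * P * P = (1 - Q) * P from by noncomm_ring [hPP]]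
      rw [this, ← key1]
      exact Lm_apply_le _ _
    have hvb : ‖v‖ ≤ b * ‖Lm (1 - P) x‖ := by
      have : v = Lm (Q * (1 - P)) (Lm (1 - P) x) := by
        rw [← Lm_mul_apply, show Q * (1 - P) * (1 - P) = Q * (1 - P) from by noncomm_ring [hPP]]
      rw [this, ← key2]
      exact Lm_apply_le _ _
    have hpyth : ‖Lm P x‖ ^ 2 + ‖Lm (1 - P) x‖ ^ 2 = ‖x‖ ^ 2 := by
      have hsum : Lm P x + Lm (1 - P) x = x := by
        rw [Lm_sub_apply, Lm_one_apply]; abel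
      have ho : (inner ℝ (Lm P x) (Lm (1 - P) x) : ℝ) = 0 := by
        rw [inner_Lm_Lm, hPT, show P * (1 - P) = 0 from by noncomm_ring [hPP],
          Lm_zero_apply, inner_zero_right]
      have := norm_add_sq_real (Lm P x) (Lm (1 - P) x)
      rw [hsum, ho] at this
      rw [this]; ring
    have hsq : ‖Lm (P - Q) x‖ ^ 2 ≤ (max a b * ‖x‖) ^ 2 := by
      have h1 : ‖u‖ ^ 2 ≤ (a * ‖Lm P x‖) ^ 2 := by
        apply pow_le_pow_left₀ (norm_nonneg _) hub
      have h2 : ‖v‖ ^ 2 ≤ (b * ‖Lm (1 - P) x‖) ^ 2 := by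
        apply pow_le_pow_left₀ (norm_nonneg _) hvb
      have h3 : a ^ 2 ≤ (max a b) ^ 2 := pow_le_pow_left₀ hanneg (le_max_left a b) 2
      have h4 : b ^ 2 ≤ (max a b) ^ 2 := pow_le_pow_left₀ hbnneg (le_max_right a b) 2
      calc ‖Lm (P - Q) x‖ ^ 2 = ‖u‖ ^ 2 + ‖v‖ ^ 2 := hnormsq
      _ ≤ (a * ‖Lm P x‖) ^ 2 + (b * ‖Lm (1 - P) x‖) ^ 2 := add_le_add h1 h2
      _ = a ^ 2 * ‖Lm P x‖ ^ 2 + b ^ 2 * ‖Lm (1 - P) x‖ ^ 2 := by ring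
      _ ≤ (max a b) ^ 2 * ‖Lm P x‖ ^ 2 + (max a b) ^ 2 * ‖Lm (1 - P) x‖ ^ 2 := by
          apply add_le_add
          · exact mul_le_mul_of_nonneg_right h3 (sq_nonneg _)
          · exact mul_le_mul_of_nonneg_right h4 (sq_nonneg _)
      _ = (max a b) ^ 2 * (‖Lm P x‖ ^ 2 + ‖Lm (1 - P) x‖ ^ 2) := by ring
      _ = (max a b) ^ 2 * ‖x‖ ^ 2 := by rw [hpyth]
      _ = (max a b * ‖x‖) ^ 2 := by ring
    have hmn : 0 ≤ max a b * ‖x‖ := mul_nonneg (le_max_of_le_left hanneg) (norm_nonneg _)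
    nlinarith [norm_nonneg (Lm (P - Q) x)]
  exact le_antisymm up (max_le low1 low2)
end

section
/- Let a, b ∈ ℝᵈ be nonzero and suppose ‖a − b‖₂ ≤ ε where 0 < ε ≤ ‖a‖₂/2. Then ‖(1/‖a‖₂²)aaᵀ − (1/‖b‖₂²)bbᵀ‖₂ ≤ √2 · ε/‖a‖₂. Equivalently, the sine of the angle between a and b is at most √2 ε/‖a‖₂. -/
open Matrix

section aux

open RealInnerProductSpace

variable {E : Type*} [NormedAddCommGroup E] [InnerProductSpace ℝ E]

lemma key1 (u v x : E) (hu : ‖u‖ = 1) (hv : ‖v‖ = 1) :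
    ‖(⟪u,x⟫) • u - (⟪v,x⟫) • v‖^2 ≤ (1 - ⟪u,v⟫^2) * ‖x‖^2 := by
  set α := ⟪u,x⟫ with hα
  set β := ⟪v,x⟫ with hβ
  set c := ⟪u,v⟫ with hc
  have hu2 : ⟪u,u⟫ = 1 := by rw [real_inner_self_eq_norm_sq, hu]; norm_num
  have hv2 : ⟪v,v⟫ = 1 := by rw [real_inner_self_eq_norm_sq, hv]; norm_num
  set S := α^2 + β^2 - 2*c*α*β with hSdef
  have hS : ‖α • u - β • v‖^2 = S := by
    rw [norm_sub_sq_real]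
    simp only [inner_smul_left, inner_smul_right, real_inner_smul_left, real_inner_smul_right,
      norm_smul, hu, hv, hu2, hv2, Real.norm_eq_abs, mul_one]
    rw [hSdef]
    simp only [sq_abs, starRingEnd_apply, star_trivial, ← hc]
    ring
  have hS0 : 0 ≤ S := hS ▸ sq_nonneg _
  set w := (α - c*β) • u + (β - c*α) • v with hw
  have hw1 : ⟪w, x⟫ = S := by
    rw [hw, inner_add_left, real_inner_smul_left, real_inner_smul_left, ← hα, ← hβ, hSdef]; ring
  have hw2 : ‖w‖^2 = (1 - c^2) * S := by
    rw [hw, norm_add_sq_real]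
    simp only [real_inner_smul_left, real_inner_smul_right, norm_smul, Real.norm_eq_abs,
      hu, hv, hu2, hv2, mul_one, ← hc]
    rw [hSdef]
    simp only [sq_abs]
    ring
  have hcs : ⟪w, x⟫ ≤ ‖w‖ * ‖x‖ := real_inner_le_norm w x
  have hc1 : c^2 ≤ 1 := by
    have := abs_real_inner_le_norm u v
    rw [hu, hv] at this
    nlinarith [abs_nonneg c, sq_abs c]
  rw [hS]
  rcases eq_or_lt_of_le hS0 with h0 | h0
  · nlinarith [sq_nonneg ‖x‖]
  · have h2 : S^2 ≤ (1-c^2)*S*‖x‖^2 := by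
      nlinarith [norm_nonneg w, norm_nonneg x, sq_nonneg (‖w‖*‖x‖ - S)]
    nlinarith

lemma key2 (a b : E) : ‖a‖^2*‖b‖^2 - ⟪a,b⟫^2 ≤ ‖a-b‖^2 * ‖b‖^2 := by
  have h := norm_sub_sq_real a b
  nlinarith [sq_nonneg (⟪a,b⟫ - ‖b‖^2)]

lemma key3 (c p q t e r : ℝ) (hq : 0 < q) (e1 : c * (p * q) = t)
    (h2 : p^2*q^2 - t^2 ≤ r^2 * q^2) (r2 : r^2 ≤ e^2) : (1 - c^2) * p^2 ≤ e^2 := by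
  have e2 : t^2 = c^2*(p^2*q^2) := by rw [← e1]; ring
  nlinarith [mul_pos hq hq, r2, h2, e2]

end aux

set_option maxHeartbeats 1000000 in
open RealInnerProductSpace in
theorem stmt_9 {d : ℕ} (a b : Fin d → ℝ) (ha : a ≠ 0) (ε : ℝ)
    (hε0 : 0 < ε) (hε : ε ≤ vnorm a / 2) (hab : vnorm (a - b) ≤ ε) :
    specNorm ((vnorm a ^ 2)⁻¹ • Matrix.vecMulVec a a -
        (vnorm b ^ 2)⁻¹ • Matrix.vecMulVec b b) ≤
      Real.sqrt 2 * ε / vnorm a := by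
  have hmv : ∀ (w y : Fin d → ℝ), Matrix.vecMulVec w w *ᵥ y = (w ⬝ᵥ y) • w := by
    intro w y
    funext i
    simp [Matrix.mulVec, Matrix.vecMulVec_apply, dotProduct, Finset.sum_mul,
      Finset.mul_sum]
    exact Finset.sum_congr rfl (fun j _ => by ring)
  have hvn : ∀ v : Fin d → ℝ, vnorm v = ‖(WithLp.equiv 2 (Fin d → ℝ)).symm v‖ := by
    intro v
    rw [EuclideanSpace.norm_eq]
    simp [vnorm, Real.norm_eq_abs, sq_abs]
  have hinner : ∀ (w : Fin d → ℝ) (y : EuclideanSpace ℝ (Fin d)),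
      ⟪(WithLp.equiv 2 (Fin d → ℝ)).symm w, y⟫ = w ⬝ᵥ (WithLp.equiv 2 (Fin d → ℝ) y) := by
    intro w y
    simp [PiLp.inner_apply, dotProduct, RCLike.inner_apply, mul_comm]
  set ea : EuclideanSpace ℝ (Fin d) := (WithLp.equiv 2 (Fin d → ℝ)).symm a with hea
  set eb : EuclideanSpace ℝ (Fin d) := (WithLp.equiv 2 (Fin d → ℝ)).symm b with heb
  have hna : vnorm a = ‖ea‖ := by rw [hea]; exact hvn a
  have hnb : vnorm b = ‖eb‖ := by rw [heb]; exact hvn b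
  have hab' : ‖ea - eb‖ ≤ ε := by
    rw [hea, heb, show (WithLp.equiv 2 (Fin d → ℝ)).symm a - (WithLp.equiv 2 (Fin d → ℝ)).symm b = (WithLp.equiv 2 (Fin d → ℝ)).symm (a - b) from rfl, ← hvn]; exact hab
  have hea0 : ea ≠ 0 := by
    intro h
    apply ha
    have := congrArg (WithLp.equiv 2 (Fin d → ℝ)) (hea ▸ h)
    simpa using this
  have hpa : 0 < ‖ea‖ := norm_pos_iff.mpr hea0
  have hεa : ε ≤ ‖ea‖ / 2 := by rwa [hna] at hε
  have hpb : 0 < ‖eb‖ := by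
    have h1 : ‖ea‖ - ‖eb‖ ≤ ‖ea - eb‖ := norm_sub_norm_le ea eb
    linarith
  have heb0 : eb ≠ 0 := norm_pos_iff.mp hpb
  set u : EuclideanSpace ℝ (Fin d) := ‖ea‖⁻¹ • ea with hu'
  set v : EuclideanSpace ℝ (Fin d) := ‖eb‖⁻¹ • eb with hv'
  have hu1 : ‖u‖ = 1 := norm_smul_inv_norm hea0
  have hv1 : ‖v‖ = 1 := norm_smul_inv_norm heb0
  rw [specNorm]
  have hC : 0 ≤ Real.sqrt 2 * ε / vnorm a := by rw [hna]; positivity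
  refine ContinuousLinearMap.opNorm_le_bound _ hC ?_
  intro x
  rw [LinearMap.coe_toContinuousLinearMap']
  have hTx : Matrix.toEuclideanLin ((vnorm a ^ 2)⁻¹ • Matrix.vecMulVec a a -
      (vnorm b ^ 2)⁻¹ • Matrix.vecMulVec b b) x = ⟪u,x⟫ • u - ⟪v,x⟫ • v := by
    rw [Matrix.toEuclideanLin_apply, Matrix.sub_mulVec, Matrix.smul_mulVec,
      Matrix.smul_mulVec, hmv, hmv, WithLp.toLp_sub, WithLp.toLp_smul,
      WithLp.toLp_smul, WithLp.toLp_smul, WithLp.toLp_smul]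
    rw [hu', hv', real_inner_smul_left, real_inner_smul_left, hea, heb, hinner, hinner,
      smul_smul, smul_smul, smul_smul, smul_smul, hna, hnb, hea, heb]
    congr 1 <;> · congr 1; rw [sq, mul_inv, show (WithLp.equiv 2 (Fin d → ℝ)) x = x.ofLp from rfl]; ring
  rw [hTx, hna]
  have h1 := key1 u v x hu1 hv1
  have h2 := key2 ea eb
  have e1 : ⟪u,v⟫ * (‖ea‖ * ‖eb‖) = ⟪ea,eb⟫ := by
    rw [hu', hv', real_inner_smul_left, real_inner_smul_right]
    field_simp
  have e2 : ⟪u,v⟫^2 * (‖ea‖^2 * ‖eb‖^2) = ⟪ea,eb⟫^2 := by rw [← e1]; ring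
  have r2 : ‖ea - eb‖^2 ≤ ε^2 := by nlinarith [norm_nonneg (ea - eb)]
  have hc2 : (1 - ⟪u,v⟫^2) * ‖ea‖^2 ≤ ε^2 := key3 _ _ _ _ _ _ hpb e1 h2 r2
  have h1' : (‖⟪u,x⟫ • u - ⟪v,x⟫ • v‖ * ‖ea‖)^2 ≤ (ε * ‖x‖)^2 :=
    calc (‖⟪u,x⟫ • u - ⟪v,x⟫ • v‖ * ‖ea‖)^2
        = ‖⟪u,x⟫ • u - ⟪v,x⟫ • v‖^2 * ‖ea‖^2 := by ring
      _ ≤ ((1 - ⟪u,v⟫^2) * ‖x‖^2) * ‖ea‖^2 := mul_le_mul_of_nonneg_right h1 (sq_nonneg _)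
      _ = ((1 - ⟪u,v⟫^2) * ‖ea‖^2) * ‖x‖^2 := by ring
      _ ≤ ε^2 * ‖x‖^2 := mul_le_mul_of_nonneg_right hc2 (sq_nonneg _)
      _ = (ε * ‖x‖)^2 := by ring
  have hfin : ‖⟪u,x⟫ • u - ⟪v,x⟫ • v‖ * ‖ea‖ ≤ ε * ‖x‖ := by
    have h3 := Real.sqrt_le_sqrt h1'
    rwa [Real.sqrt_sq (by positivity), Real.sqrt_sq (by positivity)] at h3
  have hs2 : (1:ℝ) ≤ Real.sqrt 2 := by
    nlinarith [Real.sq_sqrt (by norm_num : (0:ℝ) ≤ 2), Real.sqrt_nonneg 2]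
  rw [div_mul_eq_mul_div, le_div_iff₀ hpa]
  nlinarith [hfin, hs2, mul_nonneg hε0.le (norm_nonneg x)]
end

section
/- Let Σ ∈ ℝ^{d×d} be symmetric positive semidefinite and let Q, V ∈ ℝ^{d×k} each have orthonormal columns. Then tr(QᵀΣQ) − tr(VᵀΣV) ≤ 2k ‖Σ‖₂ ‖(I − VVᵀ)Q‖₂. -/
open Matrix

/-- Euclidean-norm helper on plain functions. -/
noncomputable def enorm' {n : ℕ} (x : Fin n → ℝ) : ℝ := ‖(WithLp.equiv 2 (Fin n → ℝ)).symm x‖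

lemma enorm'_nonneg {n : ℕ} (x : Fin n → ℝ) : 0 ≤ enorm' x := norm_nonneg _

lemma dot_le {n : ℕ} (x y : Fin n → ℝ) : x ⬝ᵥ y ≤ enorm' x * enorm' y := by
  have h := real_inner_le_norm ((WithLp.equiv 2 (Fin n → ℝ)).symm x)
      ((WithLp.equiv 2 (Fin n → ℝ)).symm y)
  rwa [WithLp.equiv_symm_apply, EuclideanSpace.inner_toLp_toLp, star_trivial, dotProduct_comm] at h

lemma mulVec_enorm_le {m n : ℕ} (A : Matrix (Fin m) (Fin n) ℝ) (x : Fin n → ℝ) :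
    enorm' (A *ᵥ x) ≤ specNorm A * enorm' x := by
  have h := (LinearMap.toContinuousLinearMap (Matrix.toEuclideanLin A)).le_opNorm
      ((WithLp.equiv 2 (Fin n → ℝ)).symm x)
  simpa [enorm', specNorm, WithLp.equiv_symm_apply, Matrix.toEuclideanLin_apply_piLp_toLp] using h

lemma enorm'_sq {n : ℕ} (x : Fin n → ℝ) : enorm' x ^ 2 = x ⬝ᵥ x := by
  have h := real_inner_self_eq_norm_sq ((WithLp.equiv 2 (Fin n → ℝ)).symm x)
  rw [WithLp.equiv_symm_apply, EuclideanSpace.inner_toLp_toLp, star_trivial] at h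
  rw [enorm', WithLp.equiv_symm_apply, ← h]

lemma trace_transpose_mul_eq {d k : ℕ} (M N : Matrix (Fin d) (Fin k) ℝ) :
    (Mᵀ * N).trace = ∑ i, Mᵀ i ⬝ᵥ Nᵀ i := by
  simp [Matrix.trace, Matrix.diag, Matrix.mul_apply, dotProduct]

lemma col_mul {d k m : ℕ} (M : Matrix (Fin d) (Fin m) ℝ) (N : Matrix (Fin m) (Fin k) ℝ)
    (i : Fin k) : (M * N)ᵀ i = M *ᵥ (Nᵀ i) := by
  funext j; simp [Matrix.mul_apply, Matrix.mulVec, dotProduct]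

lemma col_eq_mulVec_single {m n : ℕ} (A : Matrix (Fin m) (Fin n) ℝ) (i : Fin n) :
    Aᵀ i = A *ᵥ Pi.single i 1 := by
  funext j
  rw [Matrix.mulVec_single]
  simp

lemma enorm'_single {n : ℕ} (i : Fin n) : enorm' (Pi.single i 1) = 1 := by
  show ‖EuclideanSpace.single i (1:ℝ)‖ = 1
  rw [EuclideanSpace.norm_single, norm_one]

lemma col_enorm_le {m n : ℕ} (A : Matrix (Fin m) (Fin n) ℝ) (i : Fin n) :
    enorm' (Aᵀ i) ≤ specNorm A := by
  have h := mulVec_enorm_le A (Pi.single i 1)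
  rw [enorm'_single, mul_one] at h
  rwa [col_eq_mulVec_single]

lemma trace_helper {d k : ℕ} (S : Matrix (Fin d) (Fin d) ℝ)
    (A : Matrix (Fin k) (Fin d) ℝ) (C : Matrix (Fin d) (Fin k) ℝ) :
    (A * (S * C)).trace = (S * (C * A)).trace := by
  rw [← Matrix.mul_assoc, Matrix.trace_mul_comm, ← Matrix.mul_assoc, Matrix.trace_mul_comm]

theorem stmt_11 {d k : ℕ} (Sigma : Matrix (Fin d) (Fin d) ℝ) (hSigma : Sigma.PosSemidef)
    (Q V : Matrix (Fin d) (Fin k) ℝ) (hQ : Qᵀ * Q = 1) (hV : Vᵀ * V = 1) :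
    (Qᵀ * Sigma * Q).trace - (Vᵀ * Sigma * V).trace ≤
      2 * k * specNorm Sigma * specNorm ((1 - V * Vᵀ) * Q) := by
  have hS : Sigmaᵀ = Sigma := by
    have := hSigma.1
    rwa [Matrix.IsHermitian, Matrix.conjTranspose_eq_transpose_of_trivial] at this
  set B : Matrix (Fin d) (Fin k) ℝ := (1 - V * Vᵀ) * Q with hB
  set R : Matrix (Fin d) (Fin d) ℝ := 1 - Q * Qᵀ with hR
  have hRT : Rᵀ = R := by simp [hR]
  have hBT : Bᵀ = Qᵀ * (1 - V * Vᵀ) := by simp [hB, Matrix.transpose_mul]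
  -- the key matrix identity
  have hmat : Q*Qᵀ*(1 - V*Vᵀ) + R*((1-V*Vᵀ)*(Q*Qᵀ)) - R*(V*Vᵀ)*R = Q*Qᵀ - V*Vᵀ := by
    have hQX : ∀ (X : Matrix (Fin k) (Fin d) ℝ), Qᵀ * (Q * X) = X := by
      intro X; rw [← Matrix.mul_assoc, hQ, Matrix.one_mul]
    simp only [hR, Matrix.mul_sub, Matrix.sub_mul, Matrix.mul_one, Matrix.one_mul,
      Matrix.mul_assoc, hQX]
    abel
  -- rewrite each trace as trace of Sigma * (d×d matrix)
  have e0 : (Qᵀ * Sigma * Q).trace = (Sigma * (Q * Qᵀ)).trace := by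
    rw [Matrix.mul_assoc, trace_helper]
  have e0' : (Vᵀ * Sigma * V).trace = (Sigma * (V * Vᵀ)).trace := by
    rw [Matrix.mul_assoc, trace_helper]
  have e1 : (Bᵀ * (Sigma * Q)).trace = (Sigma * (Q*Qᵀ*(1 - V*Vᵀ))).trace := by
    rw [trace_helper, hBT]
    congr 1
    simp only [Matrix.mul_assoc]
  have e2 : ((Sigma * Q)ᵀ * (R * B)).trace = (Sigma * (R*((1-V*Vᵀ)*(Q*Qᵀ)))).trace := by
    rw [Matrix.transpose_mul, hS, Matrix.mul_assoc, trace_helper]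
    congr 1
    rw [hB]
    simp only [Matrix.mul_assoc]
  have e3 : ((R*V)ᵀ * (Sigma * (R*V))).trace = (Sigma * (R*(V*Vᵀ)*R)).trace := by
    rw [trace_helper, Matrix.transpose_mul, hRT]
    congr 1
    simp only [Matrix.mul_assoc]
  have key : (Qᵀ * Sigma * Q).trace - (Vᵀ * Sigma * V).trace
      = (Bᵀ * (Sigma * Q)).trace + ((Sigma * Q)ᵀ * (R * B)).trace
        - ((R*V)ᵀ * (Sigma * (R*V))).trace := by
    rw [e0, e0', e1, e2, e3, ← Matrix.trace_sub, ← Matrix.mul_sub, ← hmat,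
      Matrix.mul_sub, Matrix.mul_add, Matrix.trace_sub, Matrix.trace_add]
  rw [key]
  -- bounds
  have hq1 : ∀ i : Fin k, enorm' (Qᵀ i) = 1 := by
    intro i
    have h2 : enorm' (Qᵀ i) ^ 2 = 1 := by
      rw [enorm'_sq]
      have : (Qᵀ * Q) i i = (1 : Matrix (Fin k) (Fin k) ℝ) i i := by rw [hQ]
      simpa [Matrix.mul_apply, dotProduct, Matrix.one_apply] using this
    nlinarith [enorm'_nonneg (Qᵀ i)]
  -- R is a contraction
  have hRcontr : ∀ x : Fin d → ℝ, enorm' (R *ᵥ x) ≤ enorm' x := by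
    intro x
    have hRR : R * R = R := by
      have hQX : ∀ (X : Matrix (Fin k) (Fin d) ℝ), Qᵀ * (Q * X) = X := by
        intro X; rw [← Matrix.mul_assoc, hQ, Matrix.one_mul]
      simp only [hR, Matrix.mul_sub, Matrix.sub_mul, Matrix.mul_one, Matrix.one_mul,
        Matrix.mul_assoc, hQX]
      abel
    have hdot : (R *ᵥ x) ⬝ᵥ (R *ᵥ x) = x ⬝ᵥ (R *ᵥ x) :=
      calc (R *ᵥ x) ⬝ᵥ (R *ᵥ x) = ((R *ᵥ x) ᵥ* R) ⬝ᵥ x := Matrix.dotProduct_mulVec _ _ _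
        _ = (R *ᵥ (R *ᵥ x)) ⬝ᵥ x := by
            have hvm : ∀ v : Fin d → ℝ, v ᵥ* R = R *ᵥ v := by
              intro v
              conv_lhs => rw [← hRT]
              rw [Matrix.vecMul_transpose]
            rw [hvm]
        _ = (R *ᵥ x) ⬝ᵥ x := by rw [Matrix.mulVec_mulVec, hRR]
        _ = x ⬝ᵥ (R *ᵥ x) := dotProduct_comm _ _
    have h1 : enorm' (R *ᵥ x) ^ 2 ≤ enorm' x * enorm' (R *ᵥ x) := by
      rw [enorm'_sq, hdot]; exact dot_le _ _
    nlinarith [enorm'_nonneg (R *ᵥ x), enorm'_nonneg x]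
  have hpos : 0 ≤ ((R*V)ᵀ * (Sigma * (R*V))).trace := by
    rw [trace_transpose_mul_eq]
    apply Finset.sum_nonneg
    intro i _
    rw [col_mul Sigma (R*V) i]
    have h := hSigma.re_dotProduct_nonneg ((R*V)ᵀ i)
    simpa only [star_trivial, RCLike.re_to_real] using h
  have hT1 : (Bᵀ * (Sigma * Q)).trace ≤ k * (specNorm Sigma * specNorm B) := by
    rw [trace_transpose_mul_eq]
    calc ∑ i, Bᵀ i ⬝ᵥ (Sigma * Q)ᵀ i
        ≤ ∑ i : Fin k, specNorm Sigma * specNorm B := by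
          apply Finset.sum_le_sum
          intro i _
          calc Bᵀ i ⬝ᵥ (Sigma * Q)ᵀ i ≤ enorm' (Bᵀ i) * enorm' ((Sigma * Q)ᵀ i) := dot_le _ _
            _ ≤ specNorm B * specNorm Sigma := by
                apply mul_le_mul (col_enorm_le _ _) ?_ (enorm'_nonneg _) (specNorm_nonneg _)
                rw [col_mul]
                calc enorm' (Sigma *ᵥ Qᵀ i) ≤ specNorm Sigma * enorm' (Qᵀ i) := mulVec_enorm_le _ _
                  _ = specNorm Sigma := by rw [hq1, mul_one]
            _ = specNorm Sigma * specNorm B := by ring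
      _ = k * (specNorm Sigma * specNorm B) := by simp [Finset.sum_const]
  have hT2 : ((Sigma * Q)ᵀ * (R * B)).trace ≤ k * (specNorm Sigma * specNorm B) := by
    rw [trace_transpose_mul_eq]
    calc ∑ i, (Sigma * Q)ᵀ i ⬝ᵥ (R * B)ᵀ i
        ≤ ∑ i : Fin k, specNorm Sigma * specNorm B := by
          apply Finset.sum_le_sum
          intro i _
          calc (Sigma * Q)ᵀ i ⬝ᵥ (R * B)ᵀ i
              ≤ enorm' ((Sigma * Q)ᵀ i) * enorm' ((R * B)ᵀ i) := dot_le _ _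
            _ ≤ specNorm Sigma * specNorm B := by
                apply mul_le_mul ?_ ?_ (enorm'_nonneg _) (specNorm_nonneg _)
                · rw [col_mul]
                  calc enorm' (Sigma *ᵥ Qᵀ i) ≤ specNorm Sigma * enorm' (Qᵀ i) :=
                        mulVec_enorm_le _ _
                    _ = specNorm Sigma := by rw [hq1, mul_one]
                · rw [col_mul]
                  exact (hRcontr _).trans (col_enorm_le _ _)
      _ = k * (specNorm Sigma * specNorm B) := by simp [Finset.sum_const]
  have : (2:ℝ) * k * specNorm Sigma * specNorm B
      = k * (specNorm Sigma * specNorm B) + k * (specNorm Sigma * specNorm B) := by ring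
  rw [this]
  linarith
end
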